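/- arXiv:1610.02634 — 3 statements merged into one kernel-verified Lean document; each statement's English description precedes it below -/
import Mathlib

section
/- The poset of all maximum-sized antichains of a finite poset X, ordered by α ≤ β iff every element of α is below some element of β, is a distributive lattice. -/
/-- The type of maximum-sized antichains of a finite poset `X`. -/
def MaxSizeAC (X : Type) [Fintype X] [PartialOrder X] [DecidableEq X] :=
  {a : Finset X // IsAntichain (· ≤ ·) (↑a : Set X) ∧
      ∀ b : Finset X, IsAntichain (· ≤ ·) (↑b : Set X) → b.card ≤ a.card}

/-!
Send a maximum antichain `α` to its down-closure `↓α`. This is injective on antichains (an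
antichain is the set of maximal elements of its down-closure) and turns the order on antichains
into inclusion, so it suffices to show that the image is closed under `∪` and `∩` in the
distributive lattice of lower sets.

For maximum antichains `α, β`, every element of `α ∪ β` is maximal or minimal there, and every
element of `α ∩ β` is both. Counting, `|max(α ∪ β)| + |min(α ∪ β)| ≥ |α| + |β|`, so both are
again maximum antichains, and `↓max(α ∪ β) = ↓α ∪ ↓β`. For the meet, a maximum antichain
`γ` is maximal for inclusion, which gives `x ∈ ↓γ ↔ no element of γ lies strictly below x`;
in this form `↓min(α ∪ β) = ↓α ∩ ↓β` is immediate.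
-/

open Finset

namespace IsAntichain

variable {α : Type*} [PartialOrder α] {s t : Set α} {x y : α}

lemma mem_right_of_mem_union_of_lt_or_gt (hs : IsAntichain (· ≤ ·) s) (hx : x ∈ s)
    (hy : y ∈ s ∪ t) (hxy : x < y ∨ y < x) : y ∈ t :=
  hy.resolve_left fun hys => hxy.elim (hs.not_lt hx hys) (hs.not_lt hys hx)

lemma maximal_or_minimal_of_mem_union (hs : IsAntichain (· ≤ ·) s)
    (ht : IsAntichain (· ≤ ·) t) (hx : x ∈ s ∪ t) :
    Maximal (· ∈ s ∪ t) x ∨ Minimal (· ∈ s ∪ t) x := by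
  wlog hxs : x ∈ s generalizing s t
  · rw [Set.union_comm] at hx ⊢
    exact this ht hs hx (hx.resolve_right hxs)
  by_contra! h
  obtain ⟨y, hxy, hy⟩ := exists_gt_of_not_maximal hx h.1
  obtain ⟨z, hzx, hz⟩ := exists_lt_of_not_minimal hx h.2
  exact ht.not_lt (hs.mem_right_of_mem_union_of_lt_or_gt hxs hz (.inr hzx))
    (hs.mem_right_of_mem_union_of_lt_or_gt hxs hy (.inl hxy)) (hzx.trans hxy)

lemma maximal_and_minimal_of_mem_inter (hs : IsAntichain (· ≤ ·) s)
    (ht : IsAntichain (· ≤ ·) t) (hx : x ∈ s ∩ t) :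
    Maximal (· ∈ s ∪ t) x ∧ Minimal (· ∈ s ∪ t) x := by
  have hxu : x ∈ s ∪ t := .inl hx.1
  refine ⟨maximal_iff_forall_gt.2 ⟨hxu, fun y hxy hy => ?_⟩,
    minimal_iff_forall_lt.2 ⟨hxu, fun y hyx hy => ?_⟩⟩
  · exact ht.not_lt hx.2 (hs.mem_right_of_mem_union_of_lt_or_gt hx.1 hy (.inl hxy)) hxy
  · exact ht.not_lt (hs.mem_right_of_mem_union_of_lt_or_gt hx.1 hy (.inr hyx)) hx.2 hyx

end IsAntichain

namespace IsMaxAntichain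

variable {α : Type*} [PartialOrder α] {s : Set α} {x : α}

lemma exists_le_or_ge (hs : IsMaxAntichain (· ≤ ·) s) (x : α) : ∃ y ∈ s, x ≤ y ∨ y ≤ x := by
  by_contra! hx
  have hins : IsAntichain (· ≤ ·) (insert x s) :=
    hs.1.insert (fun y hy _ => (hx y hy).2) (fun y hy _ => (hx y hy).1)
  have hxs : x ∈ s := (hs.2 hins (Set.subset_insert x s)).symm ▸ Set.mem_insert x s
  exact (hx x hxs).1 le_rfl

lemma mem_lowerClosure_iff_forall_not_lt (hs : IsMaxAntichain (· ≤ ·) s) :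
    x ∈ lowerClosure s ↔ ∀ y ∈ s, ¬y < x := by
  refine ⟨fun hx y hy hyx => ?_, fun hx => ?_⟩
  · obtain ⟨z, hz, hxz⟩ := mem_lowerClosure.1 hx
    exact hs.1.not_lt hy hz (hyx.trans_le hxz)
  · obtain ⟨y, hy, hxy | hyx⟩ := hs.exists_le_or_ge x
    · exact mem_lowerClosure.2 ⟨y, hy, hxy⟩
    · exact mem_lowerClosure.2 ⟨y, hy, (hyx.lt_or_eq.resolve_left (hx y hy)).ge⟩

end IsMaxAntichain

namespace Finset

variable {α : Type*} [PartialOrder α] {s t : Finset α} {x : α}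

open Classical in
noncomputable def maximals (s : Finset α) : Finset α := {x ∈ s | Maximal (· ∈ s) x}

open Classical in
noncomputable def minimals (s : Finset α) : Finset α := {x ∈ s | Minimal (· ∈ s) x}

lemma mem_maximals : x ∈ s.maximals ↔ Maximal (· ∈ s) x := by
  classical
  simpa [maximals] using fun h => h.prop

lemma mem_minimals : x ∈ s.minimals ↔ Minimal (· ∈ s) x := by
  classical
  simpa [minimals] using fun h => h.prop

lemma isAntichain_maximals (s : Finset α) : IsAntichain (· ≤ ·) (s.maximals : Set α) :=
  (setOfPred_maximal_antichain (· ∈ s)).subset fun _ hx => mem_maximals.1 hx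

lemma isAntichain_minimals (s : Finset α) : IsAntichain (· ≤ ·) (s.minimals : Set α) :=
  (setOfPred_minimal_antichain (· ∈ s)).subset fun _ hx => mem_minimals.1 hx

lemma card_add_card_le_card_maximals_add_card_minimals [DecidableEq α]
    (hs : IsAntichain (· ≤ ·) (s : Set α)) (ht : IsAntichain (· ≤ ·) (t : Set α)) :
    #s + #t ≤ #(s ∪ t).maximals + #(s ∪ t).minimals := by
  have hunion : s ∪ t ⊆ (s ∪ t).maximals ∪ (s ∪ t).minimals := fun x hx => by
    have := hs.maximal_or_minimal_of_mem_union ht (by simpa using hx)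
    rw [← coe_union] at this
    exact mem_union.2 (this.imp mem_maximals.2 mem_minimals.2)
  have hinter : s ∩ t ⊆ (s ∪ t).maximals ∩ (s ∪ t).minimals := fun x hx => by
    have := hs.maximal_and_minimal_of_mem_inter ht (by simpa using hx)
    rw [← coe_union] at this
    exact mem_inter.2 (this.imp mem_maximals.2 mem_minimals.2)
  calc #s + #t = #(s ∪ t) + #(s ∩ t) := (card_union_add_card_inter s t).symm
    _ ≤ #((s ∪ t).maximals ∪ (s ∪ t).minimals) + #((s ∪ t).maximals ∩ (s ∪ t).minimals) :=
      add_le_add (card_le_card hunion) (card_le_card hinter)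
    _ = #(s ∪ t).maximals + #(s ∪ t).minimals := card_union_add_card_inter _ _

lemma lowerClosure_maximals (s : Finset α) :
    lowerClosure (s.maximals : Set α) = lowerClosure (s : Set α) := by
  refine le_antisymm (lowerClosure_mono fun x hx => (mem_maximals.1 hx).prop) ?_
  refine lowerClosure_le.2 fun x hx => ?_
  obtain ⟨y, hxy, hy⟩ := s.exists_le_maximal hx
  exact mem_lowerClosure.2 ⟨y, mem_maximals.2 hy, hxy⟩

lemma lowerClosure_minimals_union [DecidableEq α] (hs : IsMaxAntichain (· ≤ ·) (s : Set α))
    (ht : IsMaxAntichain (· ≤ ·) (t : Set α))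
    (hst : IsMaxAntichain (· ≤ ·) ((s ∪ t).minimals : Set α)) :
    lowerClosure ((s ∪ t).minimals : Set α) = lowerClosure (s : Set α) ⊓ lowerClosure t := by
  ext x
  have hbelow : (∀ y ∈ (s ∪ t).minimals, ¬y < x) ↔ ∀ y ∈ s ∪ t, ¬y < x := by
    refine ⟨fun h y hy hyx => ?_, fun h y hy => h y (mem_minimals.1 hy).prop⟩
    obtain ⟨z, hzy, hz⟩ := (s ∪ t).exists_le_minimal hy
    exact h z (mem_minimals.2 hz) (hzy.trans_lt hyx)
  simp only [SetLike.mem_coe, LowerSet.mem_inf_iff, hst.mem_lowerClosure_iff_forall_not_lt,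
    hs.mem_lowerClosure_iff_forall_not_lt, ht.mem_lowerClosure_iff_forall_not_lt]
  rw [hbelow, forall_mem_union]

end Finset

lemma IsAntichain.isMaxAntichain_of_forall_card_le {α : Type*} [PartialOrder α] {s : Finset α}
    (hs : IsAntichain (· ≤ ·) (s : Set α))
    (hmax : ∀ t : Finset α, IsAntichain (· ≤ ·) (t : Set α) → #t ≤ #s) :
    IsMaxAntichain (· ≤ ·) (s : Set α) := by
  classical
  refine ⟨hs, fun t ht hst => ?_⟩
  by_contra hne
  obtain ⟨x, hxt, hxs⟩ := Set.exists_of_ssubset (hst.ssubset_of_ne hne)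
  have hcard := hmax (insert x s) (ht.subset (by simp [Set.insert_subset_iff, hxt, hst]))
  rw [card_insert_of_notMem hxs] at hcard
  omega

namespace MaxSizeAC

variable {X : Type} [Fintype X] [PartialOrder X] [DecidableEq X]

lemma isMaxAntichain (α : MaxSizeAC X) : IsMaxAntichain (· ≤ ·) (α.1 : Set X) :=
  α.2.1.isMaxAntichain_of_forall_card_le α.2.2

lemma card_maximals_union_and_card_minimals_union (α β : MaxSizeAC X) :
    #(α.1 ∪ β.1).maximals = #α.1 ∧ #(α.1 ∪ β.1).minimals = #α.1 := by
  have := card_add_card_le_card_maximals_add_card_minimals α.2.1 β.2.1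
  have := α.2.2 _ (isAntichain_maximals (α.1 ∪ β.1))
  have := α.2.2 _ (isAntichain_minimals (α.1 ∪ β.1))
  have := β.2.2 _ α.2.1
  omega

noncomputable instance : Max (MaxSizeAC X) :=
  ⟨fun α β => ⟨(α.1 ∪ β.1).maximals, isAntichain_maximals _, fun b hb =>
    (card_maximals_union_and_card_minimals_union α β).1 ▸ α.2.2 b hb⟩⟩

noncomputable instance : Min (MaxSizeAC X) :=
  ⟨fun α β => ⟨(α.1 ∪ β.1).minimals, isAntichain_minimals _, fun b hb =>
    (card_maximals_union_and_card_minimals_union α β).2 ▸ α.2.2 b hb⟩⟩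

instance : LE (MaxSizeAC X) := ⟨fun α β => ∀ x ∈ α.1, ∃ y ∈ β.1, x ≤ y⟩

instance : LT (MaxSizeAC X) := ⟨fun α β => α ≤ β ∧ ¬β ≤ α⟩

def toLowerSet (α : MaxSizeAC X) : LowerSet X := lowerClosure (α.1 : Set X)

lemma toLowerSet_injective : Function.Injective (toLowerSet : MaxSizeAC X → LowerSet X) := by
  intro α β h
  refine Subtype.ext <| coe_injective <| Set.ext fun x => ?_
  rw [toLowerSet, toLowerSet] at h
  rw [← α.2.1.maximal_mem_lowerClosure_iff_mem, ← β.2.1.maximal_mem_lowerClosure_iff_mem, h]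

lemma toLowerSet_le_toLowerSet {α β : MaxSizeAC X} : toLowerSet α ≤ toLowerSet β ↔ α ≤ β :=
  lowerClosure_le.trans <| forall₂_congr fun _ _ => mem_lowerClosure

lemma toLowerSet_lt_toLowerSet {α β : MaxSizeAC X} : toLowerSet α < toLowerSet β ↔ α < β := by
  rw [lt_iff_le_not_ge, toLowerSet_le_toLowerSet, toLowerSet_le_toLowerSet]
  rfl

lemma toLowerSet_sup (α β : MaxSizeAC X) : toLowerSet (α ⊔ β) = toLowerSet α ⊔ toLowerSet β := by
  simp only [toLowerSet]
  rw [← lowerClosure_union, ← coe_union]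
  exact lowerClosure_maximals _

lemma toLowerSet_inf (α β : MaxSizeAC X) : toLowerSet (α ⊓ β) = toLowerSet α ⊓ toLowerSet β :=
  lowerClosure_minimals_union α.isMaxAntichain β.isMaxAntichain (α ⊓ β).isMaxAntichain

noncomputable instance : DistribLattice (MaxSizeAC X) :=
  toLowerSet_injective.distribLattice _ toLowerSet_le_toLowerSet toLowerSet_lt_toLowerSet
    toLowerSet_sup toLowerSet_inf

end MaxSizeAC

/-- The poset of all maximum-sized antichains of a finite poset X, ordered by
α ≤ β iff every element of α is below some element of β, is a distributive lattice. -/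
theorem stmt1 {X : Type} [Fintype X] [PartialOrder X] [DecidableEq X] :
    ∃ inst : DistribLattice (MaxSizeAC X),
      ∀ α β : MaxSizeAC X,
        (@LE.le _ (@Preorder.toLE _ (@PartialOrder.toPreorder _
          (@SemilatticeInf.toPartialOrder _ (@Lattice.toSemilatticeInf _
            (@DistribLattice.toLattice _ inst))))) α β) ↔
        (∀ x ∈ α.1, ∃ y ∈ β.1, x ≤ y) :=
  ⟨inferInstance, fun _ _ => Iff.rfl⟩
end

section
/- Let τ ⊆ ternary term functions of an algebra 𝕊, v a unary term function, e ∈ S, K ⊆ S, and let Θ_{K,e} = {(a,b) : ∀ t ∈ τ, t(a,b,e) ∈ K}. If Θ_{K,e} is reflexive and transitive and K = {b : (v(e), b) ∈ Θ_{K,e}}, then K is a (v,e)-τ-deductive system of 𝕊. -/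
variable {S : Type*}

def thetaRel (τ : Set (S → S → S → S)) (K : Set S) (e : S) (a b : S) : Prop :=
  ∀ t ∈ τ, t a b e ∈ K

structure IsDeductiveSystem (τ : Set (S → S → S → S)) (v : S → S) (e : S) (K : Set S) :
    Prop where
  apply_mem : v e ∈ K
  mem_of_mem_of_thetaRel : ∀ a b, a ∈ K → thetaRel τ K e a b → b ∈ K
  thetaRel_of_mem : ∀ b ∈ K, thetaRel τ K e (v e) b

theorem isDeductiveSystem_of_refl_of_trans {τ : Set (S → S → S → S)} {v : S → S}
    {e : S} {K : Set S} (hrefl : Std.Refl (thetaRel τ K e))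
    (htrans : IsTrans S (thetaRel τ K e)) (hK : ∀ b, b ∈ K ↔ thetaRel τ K e (v e) b) :
    IsDeductiveSystem τ v e K where
  apply_mem := (hK _).2 (hrefl.refl _)
  mem_of_mem_of_thetaRel a b ha hab := (hK b).2 (htrans.trans _ _ _ ((hK a).1 ha) hab)
  thetaRel_of_mem b hb := (hK b).1 hb

/-- If Θ_{K,e} = {(a,b) : ∀ t ∈ τ, t(a,b,e) ∈ K} is reflexive and transitive
and K = {b : (v(e), b) ∈ Θ_{K,e}}, then K is a (v,e)-τ-deductive system: v(e) ∈ K;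
a ∈ K and t(a,b,e) ∈ K (for all t ∈ τ) imply b ∈ K; b ∈ K implies t(v(e),b,e) ∈ K. -/
theorem stmt5 {S : Type} (v : S → S) (e : S) (τ : Set (S → S → S → S)) (K : Set S)
    (hrefl : ∀ a : S, ∀ t ∈ τ, t a a e ∈ K)
    (htrans : ∀ a b c : S, (∀ t ∈ τ, t a b e ∈ K) → (∀ t ∈ τ, t b c e ∈ K) →
      (∀ t ∈ τ, t a c e ∈ K))
    (hK : K = {b : S | ∀ t ∈ τ, t (v e) b e ∈ K}) :
    v e ∈ K ∧
    (∀ a b : S, a ∈ K → (∀ t ∈ τ, t a b e ∈ K) → b ∈ K) ∧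
    (∀ t ∈ τ, ∀ b : S, b ∈ K → t (v e) b e ∈ K) := by
  obtain ⟨hve, hmp, hrel⟩ :=
    isDeductiveSystem_of_refl_of_trans (v := v) ⟨hrefl⟩ ⟨htrans⟩ (Set.ext_iff.mp hK)
  exact ⟨hve, hmp, fun t ht b hb => hrel b hb t ht⟩
end

section
/- In a finite distributive lattice, the length of the lattice equals the number of join-irreducible elements, which also equals the number of meet-irreducible elements. -/
/-! Birkhoff's representation identifies a finite distributive lattice `L` with the lattice of
lower sets of its poset `J` of join-irreducibles. In `LowerSet J` the cardinality of a lower set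
strictly increases along a chain, so no chain has more than `|J|` steps, while a linear extension
of `J` enumerates a chain `∅ ⊂ {j₁} ⊂ {j₁, j₂} ⊂ ⋯ ⊂ J` with exactly `|J|` steps. Applied to the
dual lattice, whose join-irreducibles are the meet-irreducibles of `L` and whose chains are those
of `L` reversed, the same count gives the number of meet-irreducibles. -/

open Function OrderDual

def chainLengths (α : Type*) [Preorder α] : Set ℕ :=
  {m | ∃ c : List α, c.IsChain (· < ·) ∧ c.length = m + 1}

section Preorder

variable {α β : Type*} [Preorder α] [Preorder β] {m : ℕ}

theorem mem_chainLengths_iff : m ∈ chainLengths α ↔ ∃ f : Fin (m + 1) → α, StrictMono f := by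
  constructor
  · rintro ⟨c, hc, hlen⟩
    exact ⟨c.get ∘ Fin.cast hlen.symm,
      hc.sortedLT.strictMono_get.comp (Fin.castOrderIso hlen.symm).strictMono⟩
  · rintro ⟨f, hf⟩
    exact ⟨List.ofFn f, (List.sortedLT_ofFn_iff.2 hf).isChain, List.length_ofFn⟩

theorem le_of_mem_chainLengths {n : ℕ} {g : α → ℕ} (hg : StrictMono g) (hgn : ∀ a, g a ≤ n)
    (hm : m ∈ chainLengths α) : m ≤ n := by
  obtain ⟨f, hf⟩ := mem_chainLengths_iff.1 hm
  let g' : α → Fin (n + 1) := fun a => ⟨g a, Nat.lt_succ_of_le (hgn a)⟩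
  have hg' : StrictMono g' := fun _ _ hab => Fin.mk_lt_mk.2 (hg hab)
  simpa using Fintype.card_le_of_injective _ (hg'.comp hf).injective

theorem OrderIso.chainLengths_eq (e : α ≃o β) : chainLengths α = chainLengths β := by
  ext m
  simp only [mem_chainLengths_iff]
  exact ⟨fun ⟨f, hf⟩ => ⟨e ∘ f, e.strictMono.comp hf⟩,
    fun ⟨f, hf⟩ => ⟨e.symm ∘ f, e.symm.strictMono.comp hf⟩⟩

theorem chainLengths_orderDual : chainLengths αᵒᵈ = chainLengths α := by
  ext m
  simp only [mem_chainLengths_iff]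
  exact ⟨fun ⟨f, hf⟩ => ⟨ofDual ∘ f ∘ Fin.rev, fun _ _ hij => hf (Fin.rev_lt_rev.2 hij)⟩,
    fun ⟨f, hf⟩ => ⟨toDual ∘ f ∘ Fin.rev, fun _ _ hij => hf (Fin.rev_lt_rev.2 hij)⟩⟩

end Preorder

namespace LowerSet

variable {α : Type*} [PartialOrder α]

theorem strictMono_ncard [Finite α] : StrictMono fun s : LowerSet α => (s : Set α).ncard :=
  fun _ _ hst => Set.ncard_lt_ncard hst

def ltPreimage {n : ℕ} {φ : α → Fin n} (hφ : Monotone φ) (k : Fin (n + 1)) : LowerSet α :=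
  ⟨{a | (φ a : ℕ) < k}, fun _ _ hba ha => (Fin.le_iff_val_le_val.1 (hφ hba)).trans_lt ha⟩

theorem strictMono_ltPreimage {n : ℕ} {φ : α → Fin n} (hφ : Monotone φ) (hsurj : Surjective φ) :
    StrictMono (ltPreimage hφ) := by
  intro k l hkl
  refine lt_of_le_of_ne (fun a (ha : (φ a : ℕ) < k) => ha.trans hkl) fun heq => ?_
  obtain ⟨a, ha⟩ := hsurj ⟨k, (Fin.lt_def.1 hkl).trans_le (Nat.lt_succ_iff.1 l.is_lt)⟩
  have hal : a ∈ ltPreimage hφ l := show (φ a : ℕ) < l by rw [ha]; exact hkl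
  have hak : a ∉ ltPreimage hφ k := show ¬(φ a : ℕ) < k by rw [ha]; exact lt_irrefl _
  exact hak (heq ▸ hal)

theorem exists_strictMono_fin [Finite α] :
    ∃ f : Fin (Nat.card α + 1) → LowerSet α, StrictMono f := by
  have := Fintype.ofFinite α
  let _ : Fintype (LinearExtension α) := ‹Fintype α›
  let e := Fintype.orderIsoFinOfCardEq (LinearExtension α) (Nat.card_eq_fintype_card (α := α)).symm
  exact ⟨_, strictMono_ltPreimage (e.symm.monotone.comp toLinearExtension.monotone)
    e.symm.surjective⟩

theorem isGreatest_chainLengths [Finite α] : IsGreatest (chainLengths (LowerSet α)) (Nat.card α) :=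
  ⟨mem_chainLengths_iff.2 exists_strictMono_fin,
    fun _ => le_of_mem_chainLengths strictMono_ncard fun s => Set.ncard_le_card (s : Set α)⟩

end LowerSet

theorem isGreatest_chainLengths_card_supIrred {α : Type*} [DistribLattice α] [Fintype α]
    [OrderBot α] : IsGreatest (chainLengths α) (Nat.card {a : α // SupIrred a}) := by
  classical
  rw [OrderIso.lowerSetSupIrred.chainLengths_eq]
  exact LowerSet.isGreatest_chainLengths

/-- In a finite distributive lattice, the length of the lattice (the number
of covering steps in a longest chain, i.e. one less than the largest cardinality of a
chain) equals the number of join-irreducible elements, which also equals the number of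
meet-irreducible elements. -/
theorem stmt14 {L : Type} [Fintype L] [DistribLattice L] [BoundedOrder L] :
    Nat.card {x : L // SupIrred x} = Nat.card {x : L // InfIrred x} ∧
    IsGreatest {m : ℕ | ∃ c : List L, c.Chain' (· < ·) ∧ c.length = m + 1}
      (Nat.card {x : L // SupIrred x}) := by
  have hL : IsGreatest (chainLengths L) _ := isGreatest_chainLengths_card_supIrred
  have hLdual : IsGreatest (chainLengths L) (Nat.card {x : Lᵒᵈ // SupIrred x}) :=
    chainLengths_orderDual (α := L) ▸ isGreatest_chainLengths_card_supIrred
  have hdual : Nat.card {x : Lᵒᵈ // SupIrred x} = Nat.card {x : L // InfIrred x} :=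
    Nat.card_congr (Equiv.subtypeEquiv ofDual fun _ => supIrred_ofDual)
  exact ⟨hL.unique (hdual ▸ hLdual), hL⟩
end
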